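/- arXiv:1205.1090 — 2 statements merged into one kernel-verified Lean document; each statement's English description precedes it below -/
import Mathlib

section
/- Let P be a poset on [n], E an equivalence relation on I(P) with dual relation E*, 𝔽_q a finite field, and χ a nontrivial additive character of 𝔽_q. Assume that for all order ideals I, J and all v, v' ∈ S_{J̄^c,E*}, Σ_{u ∈ S_{Ī,E}} χ(u·v) = Σ_{u ∈ S_{Ī,E}} χ(u·v'). Let J₁, …, J_m be a complete set of representatives of the E-equivalence classes of I(P), and for each k choose v_k ∈ 𝔽_q^n with ⟨supp(v_k)⟩_{P*} = J_k^c. Then for every linear P-code C ⊆ 𝔽_q^n and every order ideal I: |C^⊥| · A_{Ī,E}(C) = Σ_{k=1}^{m} A_{J̄_k^c,E*}(C^⊥) · (Σ_{u ∈ S_{Ī,E}} χ(u·v_k)). (Theorem 3.3(iii)(b): the MacWilliams-type identity W(C,P,E) = (1/|C^⊥|) W(C^⊥,P*,E*) P_E.) -/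
open scoped BigOperators
open Finset

noncomputable section
open scoped Classical

/-- `I ⊆ [n]` is an order ideal with respect to the order relation `le`. -/
def IsIdeal {n : ℕ} (le : Fin n → Fin n → Prop) (I : Finset (Fin n)) : Prop :=
  ∀ a ∈ I, ∀ b, le b a → b ∈ I

/-- `⟨X⟩_P` : the smallest order ideal (w.r.t. `le`) containing `X`. -/
def idealCl {n : ℕ} (le : Fin n → Fin n → Prop) (X : Finset (Fin n)) : Finset (Fin n) :=
  Finset.univ.filter fun b => ∃ a ∈ X, le b a

/-- `M(A)` : the set of maximal elements of `A` with respect to `le`. -/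
def maxSet {n : ℕ} (le : Fin n → Fin n → Prop) (A : Finset (Fin n)) : Finset (Fin n) :=
  A.filter fun a => ∀ b ∈ A, le a b → b = a

/-- `E` is an equivalence relation on the set of order ideals of the poset `le`. -/
def EqvOnIdeals {n : ℕ} (le : Fin n → Fin n → Prop)
    (E : Finset (Fin n) → Finset (Fin n) → Prop) : Prop :=
  (∀ I J, E I J → IsIdeal le I ∧ IsIdeal le J) ∧
  (∀ I, IsIdeal le I → E I I) ∧
  (∀ I J, E I J → E J I) ∧
  (∀ I J K, E I J → E J K → E I K)

/-- support of a vector -/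
def supp {n : ℕ} {F : Type} [Field F] [Fintype F] (v : Fin n → F) : Finset (Fin n) :=
  Finset.univ.filter fun i => v i ≠ 0

/-- standard dot product -/
def dot {n : ℕ} {F : Type} [Field F] [Fintype F] (u v : Fin n → F) : F := ∑ i, u i * v i

/-- the sphere `S_I = {v : ⟨supp v⟩_P = I}` -/
def sph {n : ℕ} (F : Type) [Field F] [Fintype F] (le : Fin n → Fin n → Prop)
    (I : Finset (Fin n)) : Finset (Fin n → F) :=
  Finset.univ.filter fun v => idealCl le (supp v) = I

/-- the dual sphere `S_{J^c} = {v : ⟨supp v⟩_{P*} = J^c}` -/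
def sphD {n : ℕ} (F : Type) [Field F] [Fintype F] (le : Fin n → Fin n → Prop)
    (J : Finset (Fin n)) : Finset (Fin n → F) :=
  Finset.univ.filter fun v => idealCl (fun a b => le b a) (supp v) = Jᶜ

/-- the `E`-sphere `S_{Ī,E} = {v : (⟨supp v⟩_P, I) ∈ E}` -/
def sphE {n : ℕ} (F : Type) [Field F] [Fintype F] (le : Fin n → Fin n → Prop)
    (E : Finset (Fin n) → Finset (Fin n) → Prop) (I : Finset (Fin n)) :
    Finset (Fin n → F) :=
  Finset.univ.filter fun v => E (idealCl le (supp v)) I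

/-- the `E*`-sphere `S_{J̄^c,E*} = {v : ⟨supp v⟩_{P*} = K^c for some ideal K with (K,J) ∈ E}` -/
def sphED {n : ℕ} (F : Type) [Field F] [Fintype F] (le : Fin n → Fin n → Prop)
    (E : Finset (Fin n) → Finset (Fin n) → Prop) (J : Finset (Fin n)) :
    Finset (Fin n → F) :=
  Finset.univ.filter fun v =>
    ∃ K, IsIdeal le K ∧ E K J ∧ idealCl (fun a b => le b a) (supp v) = Kᶜ

/-- the dual code `C^⊥` -/
def dualCode {n : ℕ} {F : Type} [Field F] [Fintype F] (C : Submodule F (Fin n → F)) :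
    Submodule F (Fin n → F) where
  carrier := {u | ∀ v ∈ C, dot u v = 0}
  zero_mem' := by intro v hv; simp [dot]
  add_mem' := by
    intro a b ha hb v hv
    have h1 := ha v hv
    have h2 := hb v hv
    simp only [dot, Pi.add_apply] at *
    simp [add_mul, Finset.sum_add_distrib, h1, h2]
  smul_mem' := by
    intro c a ha v hv
    have h1 := ha v hv
    simp only [dot, Pi.smul_apply, smul_eq_mul] at *
    simp [mul_assoc, ← Finset.mul_sum, h1]

/-- `A_{Ī,E}(C) = |C ∩ S_{Ī,E}|` -/
def AE {n : ℕ} {F : Type} [Field F] [Fintype F] (le : Fin n → Fin n → Prop)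
    (E : Finset (Fin n) → Finset (Fin n) → Prop)
    (C : Submodule F (Fin n → F)) (I : Finset (Fin n)) : ℕ :=
  ((sphE F le E I).filter fun v => v ∈ C).card

/-- `A_{J̄^c,E*}(D) = |D ∩ S_{J̄^c,E*}|` -/
def AED {n : ℕ} {F : Type} [Field F] [Fintype F] (le : Fin n → Fin n → Prop)
    (E : Finset (Fin n) → Finset (Fin n) → Prop)
    (D : Submodule F (Fin n → F)) (J : Finset (Fin n)) : ℕ :=
  ((sphED F le E J).filter fun v => v ∈ D).card

/-- `E` is a MacWilliams-type equivalence relation (w.r.t. the field `F`). -/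
def IsMacWilliamsType {n : ℕ} (F : Type) [Field F] [Fintype F]
    (le : Fin n → Fin n → Prop) (E : Finset (Fin n) → Finset (Fin n) → Prop) : Prop :=
  ∀ C₁ C₂ : Submodule F (Fin n → F),
    (∀ I, IsIdeal le I → AE le E C₁ I = AE le E C₂ I) →
    ∀ J, IsIdeal le J → AED le E (dualCode C₁) J = AED le E (dualCode C₂) J

/-- a hierarchical poset (ordinal sum of antichains) -/
def IsHierarchical {n : ℕ} (le : Fin n → Fin n → Prop) : Prop :=
  ∃ l : Fin n → ℕ, ∀ i j, (le i j ∧ i ≠ j) ↔ l i < l j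

/-- `σ` is an automorphism of the poset `le`. -/
def IsAut {n : ℕ} (le : Fin n → Fin n → Prop) (σ : Equiv.Perm (Fin n)) : Prop :=
  ∀ x y, le x y ↔ le (σ x) (σ y)

/-- `A` and `B` are order-isomorphic with the induced orders. -/
def OrdIso {n : ℕ} (le : Fin n → Fin n → Prop) (A B : Finset (Fin n)) : Prop :=
  ∃ e : {x // x ∈ A} ≃ {x // x ∈ B}, ∀ a b : {x // x ∈ A}, le ↑a ↑b ↔ le ↑(e a) ↑(e b)

/-! Orthogonality of characters gives `∑_{v ∈ C^⊥} χ(u·v) = |C^⊥|` for `u ∈ C` and `0` otherwise,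
hence `|C^⊥| · A_{Ī,E}(C) = ∑_{v ∈ C^⊥} ∑_{u ∈ S_{Ī,E}} χ(u·v)`. The complement of the up-closure
of `supp v` is an order ideal, E-equivalent to exactly one `J_k`, so the dual spheres
`S_{J̄_k^c,E*}` partition `𝔽_q^n`; on each of them the inner sum is constant by hypothesis and can
be evaluated at `v_k`. -/
theorem dot_eq_dotProduct {n : ℕ} {F : Type} [Field F] [Fintype F] (u v : Fin n → F) :
    dot u v = u ⬝ᵥ v := rfl

theorem exists_mem_dualCode_dot_ne_zero {n : ℕ} {F : Type} [Field F] [Fintype F]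
    {C : Submodule F (Fin n → F)} {u : Fin n → F} (hu : u ∉ C) :
    ∃ w ∈ dualCode C, dot u w ≠ 0 := by
  obtain ⟨f, hfu, hfC⟩ := Submodule.exists_dual_map_eq_bot_of_notMem hu inferInstance
  set w := (dotProductEquiv F (Fin n)).symm f
  have hw : ∀ x, w ⬝ᵥ x = f x := fun x =>
    LinearMap.congr_fun ((dotProductEquiv F (Fin n)).apply_symm_apply f) x
  refine ⟨w, fun v hv => ?_, ?_⟩
  · have hfv := Submodule.mem_map_of_mem (f := f) hv
    rwa [hfC, Submodule.mem_bot, ← hw] at hfv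
  · rwa [dot_eq_dotProduct, dotProduct_comm, hw]

theorem sum_dualCode_addChar_dot {n : ℕ} {F : Type} [Field F] [Fintype F]
    {R : Type*} [CommRing R] [IsDomain R] {χ : AddChar F R} (hχ : χ ≠ 1)
    (C : Submodule F (Fin n → F)) (u : Fin n → F) :
    ∑ v ∈ univ.filter (· ∈ dualCode C), χ (dot u v) =
      if u ∈ C then (#(univ.filter (· ∈ dualCode C)) : R) else 0 := by
  let ψ : AddChar (dualCode C) R :=
    χ.compAddMonoidHom ((dotProductEquiv F (Fin n) u).comp (dualCode C).subtype).toAddMonoidHom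
  have hψ_apply : ∀ v, ψ v = χ (dot u v) := fun v => rfl
  have hψ : ψ = 0 ↔ u ∈ C := by
    refine ⟨fun h => ?_, fun hu => AddChar.eq_zero_iff.2 fun v => ?_⟩
    · by_contra hu
      obtain ⟨w, hw, hdot⟩ := exists_mem_dualCode_dot_ne_zero hu
      obtain ⟨a, ha⟩ := AddChar.ne_one_iff.1 hχ
      have := AddChar.eq_zero_iff.1 h ⟨(a * (dot u w)⁻¹) • w, (dualCode C).smul_mem _ hw⟩
      rw [hψ_apply, dot_eq_dotProduct, dotProduct_smul, smul_eq_mul, ← dot_eq_dotProduct,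
        mul_assoc, inv_mul_cancel₀ hdot, mul_one] at this
      exact ha this
    · rw [hψ_apply, dot_eq_dotProduct, dotProduct_comm, ← dot_eq_dotProduct, v.2 u hu,
        AddChar.map_zero_eq_one]
  calc ∑ v ∈ univ.filter (· ∈ dualCode C), χ (dot u v)
      = ∑ v : dualCode C, ψ v := by
        rw [← sum_subtype_eq_sum_filter, subtype_univ]; rfl
    _ = _ := by
        rw [AddChar.sum_eq_ite, Fintype.card_subtype]; exact if_congr hψ rfl rfl

theorem card_dualCode_mul_card_filter_mem {n : ℕ} {F : Type} [Field F] [Fintype F]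
    {R : Type*} [CommRing R] [IsDomain R] {χ : AddChar F R} (hχ : χ ≠ 1)
    (C : Submodule F (Fin n → F)) (S : Finset (Fin n → F)) :
    (#(univ.filter (· ∈ dualCode C)) : R) * #(S.filter (· ∈ C)) =
      ∑ v ∈ univ.filter (· ∈ dualCode C), ∑ u ∈ S, χ (dot u v) := by
  rw [sum_comm]
  simp_rw [sum_dualCode_addChar_dot hχ]
  rw [← sum_filter, sum_const, nsmul_eq_mul, mul_comm]

theorem sum_filter_eq_sum_sum_filter_of_existsUnique {α ι M : Type*} [Fintype α] [Fintype ι]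
    [AddCommMonoid M] {S : ι → Finset α} (hS : ∀ a, ∃! i, a ∈ S i) (p : α → Prop)
    [DecidablePred p] (g : α → M) :
    ∑ a ∈ univ.filter p, g a = ∑ i, ∑ a ∈ (S i).filter p, g a := by
  calc ∑ a ∈ univ.filter p, g a
      = ∑ a ∈ univ.filter p, ∑ i, if a ∈ S i then g a else 0 := by
        refine sum_congr rfl fun a _ => ?_
        obtain ⟨i, hi, huniq⟩ := hS a
        rw [sum_eq_single i (fun j _ hj => if_neg fun h => hj (huniq j h)) (by simp), if_pos hi]
    _ = ∑ i, ∑ a ∈ (S i).filter p, g a := by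
        rw [sum_comm]
        refine sum_congr rfl fun i _ => ?_
        rw [← sum_filter, filter_filter]
        congr 1
        ext a
        simp [and_comm]

theorem isIdeal_compl_idealCl_flip {n : ℕ} {le : Fin n → Fin n → Prop} [IsTrans (Fin n) le]
    (X : Finset (Fin n)) : IsIdeal le (idealCl (fun a b => le b a) X)ᶜ := by
  intro a ha b hba
  simp only [idealCl, mem_compl, mem_filter, mem_univ, true_and] at ha ⊢
  rintro ⟨c, hc, hcb⟩
  exact ha ⟨c, hc, _root_.trans hcb hba⟩

theorem mem_sphED_iff {n : ℕ} {F : Type} [Field F] [Fintype F] {le : Fin n → Fin n → Prop}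
    [IsTrans (Fin n) le] {E : Finset (Fin n) → Finset (Fin n) → Prop} {J : Finset (Fin n)}
    {v : Fin n → F} :
    v ∈ sphED F le E J ↔ E (idealCl (fun a b => le b a) (supp v))ᶜ J := by
  simp only [sphED, mem_filter, mem_univ, true_and]
  constructor
  · rintro ⟨K, -, hKJ, hK⟩
    rwa [hK, compl_compl]
  · exact fun h => ⟨_, isIdeal_compl_idealCl_flip _, h, (compl_compl _).symm⟩

theorem existsUnique_mem_sphED {n : ℕ} (F : Type) [Field F] [Fintype F]
    {le : Fin n → Fin n → Prop} [IsTrans (Fin n) le] {E : Finset (Fin n) → Finset (Fin n) → Prop}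
    {ι : Type*} {Jrep : ι → Finset (Fin n)}
    (hcomplete : ∀ J, IsIdeal le J → ∃! k, E J (Jrep k)) (v : Fin n → F) :
    ∃! k, v ∈ sphED F le E (Jrep k) := by
  simpa only [mem_sphED_iff] using hcomplete _ (isIdeal_compl_idealCl_flip (supp v))

theorem stmt_7_general {n : ℕ} (le : Fin n → Fin n → Prop)
    [IsPartialOrder (Fin n) le]
    (E : Finset (Fin n) → Finset (Fin n) → Prop) (hE : EqvOnIdeals le E)
    (F : Type) [Field F] [Fintype F] (χ : AddChar F ℂ) (hχ : ∃ a, χ a ≠ 1)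
    (hb : ∀ I J : Finset (Fin n), IsIdeal le I → IsIdeal le J →
      ∀ v ∈ sphED F le E J, ∀ v' ∈ sphED F le E J,
        ∑ u ∈ sphE F le E I, χ (dot u v) = ∑ u ∈ sphE F le E I, χ (dot u v'))
    (m : ℕ) (Jrep : Fin m → Finset (Fin n)) (hJrep : ∀ k, IsIdeal le (Jrep k))
    (hcomplete : ∀ J : Finset (Fin n), IsIdeal le J → ∃! k : Fin m, E J (Jrep k))
    (vrep : Fin m → (Fin n → F))
    (hvrep : ∀ k, idealCl (fun a b => le b a) (supp (vrep k)) = (Jrep k)ᶜ)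
    (C : Submodule F (Fin n → F)) (I : Finset (Fin n)) (hI : IsIdeal le I) :
    (((Finset.univ.filter fun u => u ∈ dualCode C).card : ℂ)) * (AE le E C I : ℂ) =
      ∑ k : Fin m, (AED le E (dualCode C) (Jrep k) : ℂ) *
        ∑ u ∈ sphE F le E I, χ (dot u (vrep k)) := by
  have hvrep_mem : ∀ k, vrep k ∈ sphED F le E (Jrep k) := fun k =>
    mem_filter.2 ⟨mem_univ _, Jrep k, hJrep k, hE.2.1 _ (hJrep k), hvrep k⟩
  rw [AE, card_dualCode_mul_card_filter_mem (AddChar.ne_one_iff.2 hχ),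
    sum_filter_eq_sum_sum_filter_of_existsUnique (existsUnique_mem_sphED F hcomplete)]
  refine sum_congr rfl fun k _ => ?_
  rw [sum_congr rfl fun v hv =>
      hb I (Jrep k) hI (hJrep k) v (mem_filter.1 hv).1 (vrep k) (hvrep_mem k),
    sum_const, nsmul_eq_mul, AED]

/-- Theorem 3.3(iii)(b): the MacWilliams-type identity
`W(C,P,E) = (1/|C^⊥|) W(C^⊥,P*,E*) P_E`. -/
theorem stmt_7 {n : ℕ} (hn : 0 < n) (le : Fin n → Fin n → Prop)
    [IsPartialOrder (Fin n) le]
    (E : Finset (Fin n) → Finset (Fin n) → Prop) (hE : EqvOnIdeals le E)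
    (F : Type) [Field F] [Fintype F] (χ : AddChar F ℂ) (hχ : ∃ a, χ a ≠ 1)
    (hb : ∀ I J : Finset (Fin n), IsIdeal le I → IsIdeal le J →
      ∀ v ∈ sphED F le E J, ∀ v' ∈ sphED F le E J,
        ∑ u ∈ sphE F le E I, χ (dot u v) = ∑ u ∈ sphE F le E I, χ (dot u v'))
    (m : ℕ) (Jrep : Fin m → Finset (Fin n)) (hJrep : ∀ k, IsIdeal le (Jrep k))
    (hcomplete : ∀ J : Finset (Fin n), IsIdeal le J → ∃! k : Fin m, E J (Jrep k))
    (vrep : Fin m → (Fin n → F))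
    (hvrep : ∀ k, idealCl (fun a b => le b a) (supp (vrep k)) = (Jrep k)ᶜ)
    (C : Submodule F (Fin n → F)) (I : Finset (Fin n)) (hI : IsIdeal le I) :
    (((Finset.univ.filter fun u => u ∈ dualCode C).card : ℂ)) * (AE le E C I : ℂ) =
      ∑ k : Fin m, (AED le E (dualCode C) (Jrep k) : ℂ) *
        ∑ u ∈ sphE F le E I, χ (dot u (vrep k)) :=
  stmt_7_general le E hE F χ hχ hb m Jrep hJrep hcomplete vrep hvrep C I hI

end
end

section
/- Let P be a poset on [n], 𝔽_q a finite field, χ a nontrivial additive character of 𝔽_q, I, J order ideals of P, and u ∈ S_I. Then Σ_{v ∈ S_{J^c}} χ(u·v) = (−1)^{|I ∩ J^c|} (q−1)^{|M(J^c)| − |I ∩ J^c|} q^{|(J^c)_M|} if I_M ∩ J^c = ∅, and Σ_{v ∈ S_{J^c}} χ(u·v) = 0 if I_M ∩ J^c ≠ ∅. (Lemma 3.7.) -/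
open scoped BigOperators
open Finset

noncomputable section
open scoped Classical

/-!
The sphere `S_{J^c}` is a box: its vectors are nonzero exactly on a free choice of coordinates
of `J^c` that contains the minimal elements `M(J^c)`. Hence `∑_{v ∈ S_{J^c}} χ(u·v)` factors into
one-dimensional sums, `∑_{t ∈ 𝔽_q} χ(ct) = q·[c = 0]` and `∑_{t ≠ 0} χ(ct) = q·[c = 0] - 1`.
For `u ∈ S_I`, `supp u ⊆ I` contains `M(I)`. If some `i ∈ I_M ∩ J^c` exists, a maximal element
`c > i` of `I` lies in `J^c \ M(J^c)` with `u_c ≠ 0`, and its factor vanishes. Otherwise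
`supp u ∩ J^c = I ∩ J^c ⊆ M(J^c)`, which contributes `-1` per element, `q - 1` for the rest of
`M(J^c)` and `q` for each element of `(J^c)_M`.
-/

lemma maxSet_subset {n : ℕ} (r : Fin n → Fin n → Prop) (A : Finset (Fin n)) : maxSet r A ⊆ A :=
  filter_subset _ _

section IdealGenerators

variable {n : ℕ} {r : Fin n → Fin n → Prop} [IsPartialOrder (Fin n) r]

lemma exists_rel_mem_maxSet {A : Finset (Fin n)} {b : Fin n} (hb : b ∈ A) :
    ∃ a ∈ maxSet r A, r b a := by
  -- an element above `b` with fewest elements of `A` above it is maximal in `A`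
  obtain ⟨c, hc, hmin⟩ := (A.filter (r b ·)).exists_min_image
    (fun c => #(A.filter (r c ·))) ⟨b, mem_filter.2 ⟨hb, refl_of r b⟩⟩
  rw [mem_filter] at hc
  refine ⟨c, mem_filter.2 ⟨hc.1, fun d hd hcd => ?_⟩, hc.2⟩
  by_contra hdc
  have hlt : #(A.filter (r d ·)) < #(A.filter (r c ·)) := by
    refine card_lt_card ⟨fun e he => ?_, fun hsub => hdc ?_⟩
    · rw [mem_filter] at he ⊢
      exact ⟨he.1, trans_of r hcd he.2⟩
    · exact antisymm_of r (mem_filter.1 (hsub (mem_filter.2 ⟨hc.1, refl_of r c⟩))).2 hcd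
  exact (hmin d (mem_filter.2 ⟨hd, trans_of r hc.2 hcd⟩)).not_gt hlt

lemma subset_idealCl (X : Finset (Fin n)) : X ⊆ idealCl r X :=
  fun a ha => mem_filter.2 ⟨mem_univ a, a, ha, refl_of r a⟩

lemma idealCl_eq_iff {U X : Finset (Fin n)} (hU : IsIdeal r U) :
    idealCl r X = U ↔ X ⊆ U ∧ maxSet r U ⊆ X := by
  constructor
  · rintro rfl
    refine ⟨subset_idealCl X, fun m hm => ?_⟩
    obtain ⟨hmU, hmax⟩ := mem_filter.1 hm
    obtain ⟨a, haX, hma⟩ := (mem_filter.1 hmU).2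
    exact hmax a (subset_idealCl X haX) hma ▸ haX
  · rintro ⟨hXU, hmaxX⟩
    ext b
    simp only [idealCl, mem_filter, mem_univ, true_and]
    constructor
    · rintro ⟨a, haX, hba⟩
      exact hU a (hXU haX) b hba
    · intro hb
      obtain ⟨a, ha, hba⟩ := exists_rel_mem_maxSet (r := r) hb
      exact ⟨a, hmaxX ha, hba⟩

end IdealGenerators

lemma IsIdeal.compl {n : ℕ} {le : Fin n → Fin n → Prop} {J : Finset (Fin n)}
    (hJ : IsIdeal le J) : IsIdeal (fun a b => le b a) Jᶜ := by
  intro a ha b hab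
  exact mem_compl.2 fun hbJ => mem_compl.1 ha (hJ b hbJ a hab)

section Spheres

variable {n : ℕ} {F : Type} [Field F] [Fintype F] {le : Fin n → Fin n → Prop}
  [IsPartialOrder (Fin n) le]

lemma mem_supp {v : Fin n → F} {i : Fin n} : i ∈ supp v ↔ v i ≠ 0 := by
  simp [supp]

lemma mem_sph_iff {I : Finset (Fin n)} (hI : IsIdeal le I) {u : Fin n → F} :
    u ∈ sph F le I ↔ supp u ⊆ I ∧ maxSet le I ⊆ supp u := by
  simp only [sph, mem_filter, mem_univ, true_and, idealCl_eq_iff hI]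

lemma filter_supp_eq_piFinset {U M : Finset (Fin n)} (hMU : M ⊆ U) :
    univ.filter (fun v : Fin n → F => supp v ⊆ U ∧ M ⊆ supp v) =
      Fintype.piFinset fun i => if i ∈ M then {0}ᶜ else if i ∈ U then univ else {0} := by
  ext v
  simp only [mem_filter, mem_univ, true_and, Fintype.mem_piFinset, subset_iff, mem_supp]
  constructor
  · rintro ⟨hU, hM⟩ i
    by_cases hiM : i ∈ M
    · simpa [hiM] using hM hiM
    by_cases hiU : i ∈ U
    · simp [hiM, hiU]
    · simp only [hiM, hiU, if_false, mem_singleton]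
      exact not_not.1 fun h => hiU (hU h)
  · intro hv
    refine ⟨fun i hvi => ?_, fun i hiM => by simpa [hiM] using hv i⟩
    by_contra hiU
    have hiM : i ∉ M := fun h => hiU (hMU h)
    simpa [hiM, hiU, hvi] using hv i

lemma sphD_eq_piFinset {J : Finset (Fin n)} (hJ : IsIdeal le J) :
    sphD F le J = Fintype.piFinset fun i =>
      if i ∈ maxSet (fun a b => le b a) Jᶜ then {0}ᶜ else if i ∈ Jᶜ then univ else {0} := by
  rw [← filter_supp_eq_piFinset (maxSet_subset _ _)]
  simp only [sphD, idealCl_eq_iff hJ.compl]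

end Spheres

lemma AddChar.map_sum_eq_prod {A M ι : Type*} [AddCommMonoid A] [CommMonoid M]
    (ψ : AddChar A M) (s : Finset ι) (f : ι → A) : ψ (∑ i ∈ s, f i) = ∏ i ∈ s, ψ (f i) :=
  map_prod ψ.toMonoidHom (fun i => Multiplicative.ofAdd (f i)) s

section CharacterSums

variable {n : ℕ} {F : Type} [Field F] [Fintype F] {χ : AddChar F ℂ}

lemma sum_piFinset_addChar_dot (χ : AddChar F ℂ) (u : Fin n → F) (T : Fin n → Finset F) :
    ∑ v ∈ Fintype.piFinset T, χ (dot u v) = ∏ i, ∑ t ∈ T i, χ (u i * t) := by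
  simp only [dot, AddChar.map_sum_eq_prod, prod_univ_sum]

lemma sum_addChar_mul (hχ : χ.IsPrimitive) (c : F) :
    ∑ t, χ (c * t) = if c = 0 then (Fintype.card F : ℂ) else 0 := by
  simp_rw [mul_comm c]
  rw [AddChar.sum_mulShift c hχ]
  split_ifs <;> simp

lemma sum_compl_zero_addChar_mul (hχ : χ.IsPrimitive) (c : F) :
    ∑ t ∈ ({0} : Finset F)ᶜ, χ (c * t) = if c = 0 then (Fintype.card F : ℂ) - 1 else -1 := by
  have hsplit := sum_compl_add_sum {0} fun t => χ (c * t)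
  rw [sum_singleton, mul_zero, AddChar.map_zero_eq_one, sum_addChar_mul hχ] at hsplit
  rw [eq_sub_of_add_eq hsplit]
  split_ifs <;> ring

end CharacterSums

section CharacterSumOverSphere

variable {n : ℕ} {F : Type} [Field F] [Fintype F] {χ : AddChar F ℂ}
  {le : Fin n → Fin n → Prop} [IsPartialOrder (Fin n) le] {I J : Finset (Fin n)}

lemma sum_sphD_addChar_dot (hJ : IsIdeal le J) (hχ : χ.IsPrimitive) (u : Fin n → F) :
    ∑ v ∈ sphD F le J, χ (dot u v) =
      (∏ i ∈ maxSet (fun a b => le b a) Jᶜ,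
          if i ∈ supp u then -1 else ((Fintype.card F : ℂ) - 1)) *
        ∏ i ∈ Jᶜ \ maxSet (fun a b => le b a) Jᶜ,
          if i ∈ supp u then 0 else (Fintype.card F : ℂ) := by
  have hMJ := maxSet_subset (fun a b => le b a) Jᶜ
  rw [sphD_eq_piFinset hJ, sum_piFinset_addChar_dot, ← prod_mul_prod_compl Jᶜ,
    prod_eq_one (s := Jᶜᶜ) fun i hi => ?_, mul_one, ← prod_sdiff hMJ, mul_comm]
  · congr 1 <;> refine prod_congr rfl fun i hi => ?_
    · rw [if_pos hi, sum_compl_zero_addChar_mul hχ]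
      simp only [mem_supp, ne_eq, ite_not]
    · obtain ⟨hiJ, hiM⟩ := mem_sdiff.1 hi
      rw [if_neg hiM, if_pos hiJ, sum_addChar_mul hχ]
      simp only [mem_supp, ne_eq, ite_not]
  · have hiJ : i ∉ Jᶜ := by simpa using hi
    rw [if_neg fun h => hiJ (hMJ h), if_neg hiJ, sum_singleton, mul_zero,
      AddChar.map_zero_eq_one]

end CharacterSumOverSphere

section SphereSupports

variable {n : ℕ} {le : Fin n → Fin n → Prop} {I J : Finset (Fin n)}

lemma inter_subset_of_sdiff_inter_eq_empty {A B C : Finset (Fin n)} (h : (A \ B) ∩ C = ∅) :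
    A ∩ C ⊆ B := by
  intro i hi
  by_contra hiB
  simpa [h] using mem_inter.2 ⟨mem_sdiff.2 ⟨(mem_inter.1 hi).1, hiB⟩, (mem_inter.1 hi).2⟩

lemma inter_compl_subset_maxSet_swap (hI : IsIdeal le I) (h : (I \ maxSet le I) ∩ Jᶜ = ∅) :
    I ∩ Jᶜ ⊆ maxSet (fun a b => le b a) Jᶜ := by
  intro i hi
  obtain ⟨hiI, hiJ⟩ := mem_inter.1 hi
  refine mem_filter.2 ⟨hiJ, fun b hbJ hbi => ?_⟩
  -- `b` lies in `I ∩ Jᶜ`, hence is maximal in `I`, and it sits below `i ∈ I`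
  have hb := inter_subset_of_sdiff_inter_eq_empty h (mem_inter.2 ⟨hI i hiI b hbi, hbJ⟩)
  exact ((mem_filter.1 hb).2 i hiI hbi).symm

lemma maxSet_swap_inter_eq {S : Finset (Fin n)} (hI : IsIdeal le I) (hSI : S ⊆ I)
    (hmaxS : maxSet le I ⊆ S) (h : (I \ maxSet le I) ∩ Jᶜ = ∅) :
    maxSet (fun a b => le b a) Jᶜ ∩ S = I ∩ Jᶜ := by
  ext i
  simp only [mem_inter]
  constructor
  · rintro ⟨hiM, hiS⟩
    exact ⟨hSI hiS, maxSet_subset _ _ hiM⟩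
  · intro hi
    exact ⟨inter_compl_subset_maxSet_swap hI h (mem_inter.2 hi),
      hmaxS (inter_subset_of_sdiff_inter_eq_empty h (mem_inter.2 hi))⟩

lemma exists_mem_sdiff_maxSet_swap [IsPartialOrder (Fin n) le] {S : Finset (Fin n)}
    (hJ : IsIdeal le J) (hmaxS : maxSet le I ⊆ S) (h : (I \ maxSet le I) ∩ Jᶜ ≠ ∅) :
    ∃ c ∈ Jᶜ \ maxSet (fun a b => le b a) Jᶜ, c ∈ S := by
  obtain ⟨i, hi⟩ := nonempty_iff_ne_empty.2 h
  obtain ⟨⟨hiI, hinm⟩, hiJ⟩ : (i ∈ I ∧ i ∉ maxSet le I) ∧ i ∈ Jᶜ := by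
    simpa only [mem_inter, mem_sdiff] using hi
  obtain ⟨c, hc, hic⟩ := exists_rel_mem_maxSet (r := le) hiI
  have hci : c ≠ i := by
    rintro rfl
    exact hinm hc
  refine ⟨c, mem_sdiff.2 ⟨hJ.compl i hiJ c hic, fun hcM => hci ?_⟩, hmaxS hc⟩
  exact ((mem_filter.1 hcM).2 i hiJ hic).symm

end SphereSupports

theorem stmt_10_general {n : ℕ} (le : Fin n → Fin n → Prop)
    [IsPartialOrder (Fin n) le]
    (F : Type) [Field F] [Fintype F] (χ : AddChar F ℂ) (hχ : ∃ a, χ a ≠ 1)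
    (I J : Finset (Fin n)) (hI : IsIdeal le I) (hJ : IsIdeal le J)
    (u : Fin n → F) (hu : u ∈ sph F le I) :
    ((I \ maxSet le I) ∩ Jᶜ = ∅ →
      ∑ v ∈ sphD F le J, χ (dot u v) =
        (-1 : ℂ) ^ (I ∩ Jᶜ).card *
          ((Fintype.card F : ℂ) - 1) ^
            ((maxSet (fun a b => le b a) Jᶜ).card - (I ∩ Jᶜ).card) *
          (Fintype.card F : ℂ) ^ (Jᶜ \ maxSet (fun a b => le b a) Jᶜ).card) ∧
    ((I \ maxSet le I) ∩ Jᶜ ≠ ∅ →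
      ∑ v ∈ sphD F le J, χ (dot u v) = 0) := by
  have hprim : χ.IsPrimitive := AddChar.IsPrimitive.of_ne_one (AddChar.ne_one_iff.2 hχ)
  obtain ⟨hSI, hmaxS⟩ := (mem_sph_iff hI).1 hu
  rw [sum_sphD_addChar_dot hJ hprim]
  constructor
  · intro h
    have hMS := maxSet_swap_inter_eq hI hSI hmaxS h
    have hnotS : ∀ i ∈ Jᶜ \ maxSet (fun a b => le b a) Jᶜ, i ∉ supp u := fun i hi hiS => by
      have : i ∈ I ∩ Jᶜ := mem_inter.2 ⟨hSI hiS, (mem_sdiff.1 hi).1⟩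
      rw [← hMS] at this
      exact (mem_sdiff.1 hi).2 (mem_inter.1 this).1
    rw [prod_ite, filter_mem_eq_inter, filter_notMem_eq_sdiff, prod_const, prod_const,
      card_sdiff, inter_comm (supp u), hMS, prod_congr rfl fun i hi => if_neg (hnotS i hi),
      prod_const]
  · intro h
    obtain ⟨c, hc, hcS⟩ := exists_mem_sdiff_maxSet_swap hJ hmaxS h
    exact mul_eq_zero_of_right _ (prod_eq_zero hc (if_pos hcS))

/-- Lemma 3.7: the character sum over the sphere `S_{J^c}`. -/
theorem stmt_10 {n : ℕ} (hn : 0 < n) (le : Fin n → Fin n → Prop)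
    [IsPartialOrder (Fin n) le]
    (F : Type) [Field F] [Fintype F] (χ : AddChar F ℂ) (hχ : ∃ a, χ a ≠ 1)
    (I J : Finset (Fin n)) (hI : IsIdeal le I) (hJ : IsIdeal le J)
    (u : Fin n → F) (hu : u ∈ sph F le I) :
    ((I \ maxSet le I) ∩ Jᶜ = ∅ →
      ∑ v ∈ sphD F le J, χ (dot u v) =
        (-1 : ℂ) ^ (I ∩ Jᶜ).card *
          ((Fintype.card F : ℂ) - 1) ^
            ((maxSet (fun a b => le b a) Jᶜ).card - (I ∩ Jᶜ).card) *
          (Fintype.card F : ℂ) ^ (Jᶜ \ maxSet (fun a b => le b a) Jᶜ).card) ∧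
    ((I \ maxSet le I) ∩ Jᶜ ≠ ∅ →
      ∑ v ∈ sphD F le J, χ (dot u v) = 0) :=
  stmt_10_general le F χ hχ I J hI hJ u hu
end
end
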